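/- arXiv:1602.06607 — 4 statements merged into one kernel-verified Lean document; each statement's English description precedes it below -/
import Mathlib

section
/- Let F be a field, let A₀ and A₁ be k×l matrices with entries in F, and let r be a natural number. If there exist r+2 pairwise distinct elements x₁,…,x_{r+2} of F such that rank(A₀ + x_t·A₁) ≤ r for every t = 1,…,r+2, then rank(A₀ + x·A₁) ≤ r for every x ∈ F. -/
/-! If `rank (A₀ + y • A₁) > r`, some `(r+1) × (r+1)` minor of `A₀ + y • A₁` is nonzero. The same
minor of `A₀ + X • A₁` is a polynomial of degree at most `r + 1` in `X` which vanishes at the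
`r + 2` points `x t`, hence is zero, and in particular vanishes at `y`. -/

open Matrix Polynomial

theorem Polynomial.eval_det_X_add_C {R n : Type*} [CommRing R] [Fintype n] [DecidableEq n]
    (A B : Matrix n n R) (c : R) :
    ((X : R[X]) • A.map C + B.map C).det.eval c = (c • A + B).det := by
  rw [← coe_evalRingHom, RingHom.map_det]
  congr 1
  ext i j
  simp only [RingHom.mapMatrix_apply, map_apply, Matrix.add_apply, Matrix.smul_apply, smul_eq_mul,
    coe_evalRingHom, eval_add, eval_mul, eval_X, eval_C]

theorem Matrix.det_add_smul_eq_zero_of_injective {R n ι : Type*} [CommRing R] [IsDomain R]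
    [Fintype n] [DecidableEq n] [Fintype ι] (M₀ M₁ : Matrix n n R) {x : ι → R}
    (hx : Function.Injective x) (hcard : Fintype.card n < Fintype.card ι)
    (hdet : ∀ i, (M₀ + x i • M₁).det = 0) (c : R) : (M₀ + c • M₁).det = 0 := by
  have hzero : ((X : R[X]) • M₁.map C + M₀.map C).det = 0 :=
    eq_zero_of_natDegree_lt_card_of_eval_eq_zero _ hx
      (fun i => by rw [eval_det_X_add_C, add_comm, hdet])
      ((natDegree_det_X_add_C_le M₁ M₀).trans_lt hcard)
  rw [add_comm, ← eval_det_X_add_C, hzero, eval_zero]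

namespace Matrix

variable {K m n : Type*} [Field K]

theorem exists_linearIndependent_rows_of_le_rank [Finite m] [Fintype n] (A : Matrix m n K) {r : ℕ}
    (h : r ≤ A.rank) : ∃ f : Fin r → m, LinearIndependent K (A.submatrix f id).row := by
  obtain ⟨κ, a, ha, hspan, hli⟩ := exists_linearIndependent' K A.row
  have : Finite κ := Finite.of_injective a ha
  have := Fintype.ofFinite κ
  have hκ : A.rank = Fintype.card κ := by
    rw [rank_eq_finrank_span_row, ← hspan, finrank_span_eq_card hli]
  obtain ⟨e⟩ : Nonempty (Fin r ↪ κ) :=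
    Function.Embedding.nonempty_of_card_le (by simpa [hκ] using h)
  exact ⟨a ∘ e, hli.comp e e.injective⟩

theorem exists_det_submatrix_ne_zero_of_le_rank [Fintype m] [Fintype n] (A : Matrix m n K)
    {r : ℕ} (h : r ≤ A.rank) : ∃ (f : Fin r → m) (g : Fin r → n), (A.submatrix f g).det ≠ 0 := by
  obtain ⟨f, hf⟩ := A.exists_linearIndependent_rows_of_le_rank h
  have hrank : r ≤ (A.submatrix f id)ᵀ.rank := by
    rw [rank_transpose, hf.rank_matrix, Fintype.card_fin]
  obtain ⟨g, hg⟩ := (A.submatrix f id)ᵀ.exists_linearIndependent_rows_of_le_rank hrank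
  refine ⟨f, g, ?_⟩
  rw [← det_transpose]
  exact ((isUnit_iff_isUnit_det _).mp (linearIndependent_rows_iff_isUnit.mp hg)).ne_zero

theorem card_le_rank_of_det_submatrix_ne_zero [Fintype n] {ι : Type*} [Fintype ι] [DecidableEq ι]
    (A : Matrix m n K) (f : ι → m) (g : ι → n) (h : (A.submatrix f g).det ≠ 0) :
    Fintype.card ι ≤ A.rank :=
  (rank_of_det_ne_zero h).symm.le.trans (rank_submatrix_le A f g)

theorem le_rank_iff_exists_det_submatrix_ne_zero [Fintype m] [Fintype n] (A : Matrix m n K)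
    {r : ℕ} : r ≤ A.rank ↔ ∃ (f : Fin r → m) (g : Fin r → n), (A.submatrix f g).det ≠ 0 :=
  ⟨A.exists_det_submatrix_ne_zero_of_le_rank, fun ⟨f, g, h⟩ => by
    simpa using A.card_le_rank_of_det_submatrix_ne_zero f g h⟩

end Matrix

/-- If `A₀, A₁` are `k×l` matrices over a field `F` and there are `r+2` pairwise distinct
elements `x t` of `F` with `rank (A₀ + x t • A₁) ≤ r`, then `rank (A₀ + y • A₁) ≤ r`
for every `y ∈ F`. -/
theorem rank_pencil_le_of_distinct {F : Type*} [Field F] {k l : ℕ}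
    (A₀ A₁ : Matrix (Fin k) (Fin l) F) (r : ℕ)
    (h : ∃ x : Fin (r + 2) → F, Function.Injective x ∧
      ∀ t : Fin (r + 2), (A₀ + x t • A₁).rank ≤ r) :
    ∀ y : F, (A₀ + y • A₁).rank ≤ r := by
  obtain ⟨x, hx, hrank⟩ := h
  intro y
  by_contra hy
  obtain ⟨f, g, hminor⟩ := (le_rank_iff_exists_det_submatrix_ne_zero _).mp (not_le.mp hy)
  have hvanish (t : Fin (r + 2)) : ((A₀ + x t • A₁).submatrix f g).det = 0 := by
    by_contra hne
    exact (hrank t).not_gt ((le_rank_iff_exists_det_submatrix_ne_zero _).mpr ⟨f, g, hne⟩)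
  exact hminor (det_add_smul_eq_zero_of_injective _ _ hx (by simp) hvanish y)
end

section
/- Assume nd ≥ 2n+4. For every a ∈ {0,1,…,d−1}^{n/2+1} and every permutation b of {0,1,…,n+1}, the rank of the period matrix [p^{a,b}_{i+j}] equals binom(n/2+d, d) − (n/2+1)². -/
open Finset Matrix

/-- `ζ_{2d} = exp(2πi/(2d))`. -/
noncomputable def zeta2d (d : ℕ) : ℂ :=
  Complex.exp (2 * Real.pi * Complex.I / (2 * (d : ℂ)))

/-- The even-position index `2e` in `{0,…,n+1}` (with `n = 2h`). -/
def evIdx (h : ℕ) (e : Fin (h + 1)) : Fin (2 * h + 2) :=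
  ⟨2 * e.1, by have := e.isLt; omega⟩

/-- The odd-position index `2e+1` in `{0,…,n+1}` (with `n = 2h`). -/
def odIdx (h : ℕ) (e : Fin (h + 1)) : Fin (2 * h + 2) :=
  ⟨2 * e.1 + 1, by have := e.isLt; omega⟩

/-- The index set `I_N`: tuples `(i_0,…,i_{n+1})` with `0 ≤ i_e ≤ d-2` and `∑ i_e = N`,
for `n = 2h` even. -/
abbrev IdxSet (h d N : ℕ) : Type :=
  {i : Fin (2 * h + 2) → Fin (d - 1) // ∑ e, (i e).1 = N}

/-- The period vector `p^{a,b}` of the linear cycle `ℙ^{n/2}_{a,b}` in the Fermat variety,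
extended by zero to all integer tuples. -/
noncomputable def pvec (h d : ℕ) (a : Fin (h + 1) → ℕ) (b : Equiv.Perm (Fin (2 * h + 2)))
    (i : Fin (2 * h + 2) → ℕ) : ℂ :=
  if ∀ e : Fin (h + 1), i (b (evIdx h e)) + i (b (odIdx h e)) = d - 2 then
    zeta2d d ^ (∑ e : Fin (h + 1), (i (b (evIdx h e)) + 1) * (1 + 2 * a e))
  else 0

/-- The period matrix `[p_{i+j}]` with rows indexed by `I_{(n/2)d-n-2}` and columns by `I_d`. -/
noncomputable def pmat (h d : ℕ) (p : (Fin (2 * h + 2) → ℕ) → ℂ) :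
    Matrix (IdxSet h d (h * d - (2 * h + 2))) (IdxSet h d d) ℂ :=
  Matrix.of fun i j => p fun e => (i.1 e).1 + (j.1 e).1

/-- The period vector `P` of the linear cycle with `a = (0,…,0)` and `b = id`. -/
noncomputable def Pvec (h d : ℕ) : (Fin (2 * h + 2) → ℕ) → ℂ :=
  pvec h d (fun _ => 0) (Equiv.refl _)

/-- The period vector `P̌_m` (with `μ = m+1`): `a` has first `μ` entries `0`, the rest `1`,
and `b = id`. -/
noncomputable def PcheckVec (h d μ : ℕ) : (Fin (2 * h + 2) → ℕ) → ℂ :=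
  pvec h d (fun e => if e.1 < μ then 0 else 1) (Equiv.refl _)

/-- The combinatorial constant `C_{α_1,…,α_s}`. -/
def Ccoef (n d : ℕ) {s : ℕ} (α : Fin s → ℕ) : ℤ :=
  ((n + 1 + d).choose (n + 1) : ℤ) -
    ∑ k ∈ Finset.Icc 1 s, (-1 : ℤ) ^ (k - 1) *
      ∑ T ∈ Finset.univ.filter (fun T : Finset (Fin s) => T.card = k ∧ ∑ i ∈ T, α i ≤ d),
        (((n + 1 + d - ∑ i ∈ T, α i).choose (n + 1) : ℤ))

/-- The sequence `x^s, y^t` (x repeated s times followed by y repeated t times). -/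
def twoBlock (x y s t : ℕ) : Fin (s + t) → ℕ := fun i => if i.1 < s then x else y

/-- `K^d_n(m) = 2·C_{1^{n/2+1},(d-1)^{n/2+1}} − C_{1^{n−m+1},(d−1)^{m+1}}`, with `n = 2h`,
`μ = m+1`. -/
def Kdef (h d μ : ℕ) : ℤ :=
  2 * Ccoef (2 * h) d (twoBlock 1 (d - 1) (h + 1) (h + 1)) -
    Ccoef (2 * h) d (twoBlock 1 (d - 1) (2 * h + 2 - μ) μ)

/-! For a column index `j` write `c(j)_e = j_{b(2e)} + j_{b(2e+1)}` for its pair sums. The entry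
`p_{i+j}` is nonzero only when all pair sums of `i + j` equal `d - 2`, and then it splits as a
power of `ζ` depending on `j` times one depending on `i`; so column `j` is a nonzero multiple of a
vector `W_{c(j)}` (`columnOfPairSums`) that depends on `c(j)` only. `W_c` vanishes unless every
`c_e ≤ d - 2`, and the remaining `W_c` are linearly independent, because `W_c` is the only one
that is nonzero on the row whose pair sums are `d - 2 - c`. The rank is therefore the number of
compositions of `d` into `n/2 + 1` parts of size at most `d - 2`; the other compositions have
exactly one part `≥ d - 1` (as `d ≥ 3`), and there are `(n/2 + 1)²` of them. -/

theorem linearIndependent_of_diag_apply_ne_zero {ι m K : Type*} [Field K] (v : ι → m → K)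
    (r : ι → m) (hdiag : ∀ i, v i (r i) ≠ 0) (hoff : ∀ i j, j ≠ i → v j (r i) = 0) :
    LinearIndependent K v := by
  classical
  rw [linearIndependent_iff']
  intro s g hsum i hi
  have heval := congrFun hsum (r i)
  simp only [Finset.sum_apply, Pi.smul_apply, smul_eq_mul, Pi.zero_apply] at heval
  rw [sum_eq_single_of_mem i hi fun j _ hji => by rw [hoff i j hji, mul_zero]] at heval
  exact (mul_eq_zero.1 heval).resolve_right (hdiag i)

theorem Matrix.rank_eq_card_of_col_eq_smul {m n ι K : Type*} [Fintype m] [Fintype n] [Field K]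
    (M : Matrix m n K) (W : ι → m → K) (c : n → ι) (s : n → K) (hs : ∀ j, s j ≠ 0)
    (hM : ∀ j, M.col j = s j • W (c j)) (G : Finset ι) (hzero : ∀ j, c j ∉ G → W (c j) = 0)
    (hsurj : ∀ g ∈ G, ∃ j, c j = g) (hW : LinearIndependent K fun g : G => W g) :
    M.rank = #G := by
  have hspan : Submodule.span K (Set.range M.col) =
      Submodule.span K (Set.range fun g : G => W g) := by
    apply le_antisymm <;> rw [Submodule.span_le]
    · rintro _ ⟨j, rfl⟩
      rw [hM]
      by_cases hj : c j ∈ G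
      · exact Submodule.smul_mem _ _ (Submodule.subset_span ⟨⟨c j, hj⟩, rfl⟩)
      · rw [hzero j hj, smul_zero]
        exact Submodule.zero_mem _
    · rintro _ ⟨⟨g, hg⟩, rfl⟩
      obtain ⟨j, rfl⟩ := hsurj g hg
      have hcol : W (c j) = (s j)⁻¹ • M.col j := by rw [hM, inv_smul_smul₀ (hs j)]
      show W (c j) ∈ _
      rw [hcol]
      exact Submodule.smul_mem _ _ (Submodule.subset_span ⟨j, rfl⟩)
  rw [rank_eq_finrank_span_cols, hspan, finrank_span_eq_card hW, Fintype.card_coe]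

namespace Finset.Nat

theorem card_antidiagonalTuple (k n : ℕ) :
    #(antidiagonalTuple k n) = (k + n - 1).choose n := by
  rw [← Nat.card_eq_finsetCard,
    Nat.card_congr (Equiv.subtypeEquivRight fun _ => mem_antidiagonalTuple),
    Nat.card_congr (Sym.equivNatSumOfFintype (Fin k) n).symm, Nat.card_eq_fintype_card,
    Sym.card_sym_eq_choose, Fintype.card_fin]

theorem card_antidiagonalTuple_filter_le_apply (k n m : ℕ) (e : Fin k) :
    #{c ∈ antidiagonalTuple k (n + m) | m ≤ c e} = #(antidiagonalTuple k n) := by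
  refine card_nbij' (fun c => c - Pi.single e m) (fun c => c + Pi.single e m) ?_ ?_ ?_ ?_
  · intro c hc
    simp only [coe_filter, Set.mem_ofPred_eq, mem_antidiagonalTuple] at hc
    have hle : ∀ x ∈ univ, (Pi.single e m : Fin k → ℕ) x ≤ c x := fun x _ => by
      rcases eq_or_ne x e with rfl | hx
      · simpa using hc.2
      · simp [hx]
    simp [mem_antidiagonalTuple, sum_tsub_distrib _ hle, hc.1]
  · intro c hc
    simp only [mem_coe, mem_antidiagonalTuple] at hc
    simp [mem_antidiagonalTuple, sum_add_distrib, hc]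
  · intro c hc
    simp only [coe_filter, Set.mem_ofPred_eq] at hc
    ext x
    rcases eq_or_ne x e with rfl | hx
    · simpa using Nat.sub_add_cancel hc.2
    · simp [hx]
  · intro c _
    ext x
    simp

end Finset.Nat

open Finset.Nat

def boundedTuples (k d : ℕ) : Finset (Fin k → ℕ) :=
  {c ∈ antidiagonalTuple k d | ∀ e, c e ≤ d - 2}

theorem mem_boundedTuples {k d : ℕ} {c : Fin k → ℕ} :
    c ∈ boundedTuples k d ↔ ∑ e, c e = d ∧ ∀ e, c e ≤ d - 2 := by
  rw [boundedTuples, mem_filter, mem_antidiagonalTuple]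

theorem sum_tsub_of_mem_boundedTuples {h d : ℕ} (hd : 2 ≤ d) {c : Fin (h + 1) → ℕ}
    (hc : c ∈ boundedTuples (h + 1) d) : ∑ e, (d - 2 - c e) = h * d - (2 * h + 2) := by
  obtain ⟨hsum, hle⟩ := mem_boundedTuples.1 hc
  rw [sum_tsub_distrib _ fun e _ => hle e, hsum, sum_const, card_univ, Fintype.card_fin,
    smul_eq_mul]
  obtain ⟨k, rfl⟩ := Nat.exists_eq_add_of_le hd
  simp only [Nat.add_sub_cancel_left]
  ring_nf
  omega

theorem card_boundedTuples_add_sq (k d : ℕ) (hd : 3 ≤ d) :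
    #(boundedTuples k d) + k ^ 2 = (k + d - 1).choose d := by
  have hbad : {c ∈ antidiagonalTuple k d | ¬ ∀ e, c e ≤ d - 2}
      = univ.biUnion fun e => {c ∈ antidiagonalTuple k (1 + (d - 1)) | d - 1 ≤ c e} := by
    ext c
    simp only [mem_filter, mem_biUnion, mem_univ, true_and, not_forall, not_le]
    rw [show 1 + (d - 1) = d by omega]
    constructor
    · rintro ⟨hc, e, he⟩; exact ⟨e, hc, by omega⟩
    · rintro ⟨e, hc, he⟩; exact ⟨hc, e, by omega⟩
  have hdisj : ((univ : Finset (Fin k)) : Set (Fin k)).PairwiseDisjoint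
      fun e => {c ∈ antidiagonalTuple k (1 + (d - 1)) | d - 1 ≤ c e} := by
    intro e _ e' _ hne
    simp only [Function.onFun, disjoint_left, mem_filter, mem_antidiagonalTuple]
    rintro c ⟨hc, he⟩ ⟨-, he'⟩
    have := sum_le_sum_of_subset (f := c) (subset_univ {e, e'})
    rw [sum_pair hne] at this
    omega
  have hsplit := card_filter_add_card_filter_not (s := antidiagonalTuple k d)
    (p := fun c => ∀ e, c e ≤ d - 2)
  rw [hbad, card_biUnion hdisj] at hsplit
  simp only [card_antidiagonalTuple_filter_le_apply, card_antidiagonalTuple, sum_const,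
    card_univ, Fintype.card_fin, Nat.add_sub_cancel, Nat.choose_one_right, smul_eq_mul] at hsplit
  rw [boundedTuples, ← hsplit, sq]

section Pairing

variable {h : ℕ} (b : Equiv.Perm (Fin (2 * h + 2)))

def pairing : Fin (h + 1) × Fin 2 ≃ Fin (2 * h + 2) :=
  (finProdFinEquiv.trans (finCongr (by ring))).trans b

@[simp]
theorem pairing_zero (e : Fin (h + 1)) : pairing b (e, 0) = b (evIdx h e) := by
  simp [pairing, finProdFinEquiv, evIdx]

@[simp]
theorem pairing_one (e : Fin (h + 1)) : pairing b (e, 1) = b (odIdx h e) := by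
  simp [pairing, finProdFinEquiv, odIdx, Fin.ext_iff]
  omega

theorem sum_eq_sum_pairs {M : Type*} [AddCommMonoid M] (g : Fin (2 * h + 2) → M) :
    ∑ x, g x = ∑ e : Fin (h + 1), (g (b (evIdx h e)) + g (b (odIdx h e))) := by
  rw [← (pairing b).sum_comp, Fintype.sum_prod_type]
  simp [Fin.sum_univ_two]

def pairSums (i : Fin (2 * h + 2) → ℕ) (e : Fin (h + 1)) : ℕ :=
  i (b (evIdx h e)) + i (b (odIdx h e))

theorem sum_pairSums (i : Fin (2 * h + 2) → ℕ) : ∑ e, pairSums b i e = ∑ x, i x :=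
  (sum_eq_sum_pairs b i).symm

def spread (u : Fin (h + 1) → ℕ) (x : Fin (2 * h + 2)) : ℕ :=
  if ((pairing b).symm x).2 = 0 then u ((pairing b).symm x).1 else 0

@[simp]
theorem spread_evIdx (u : Fin (h + 1) → ℕ) (e : Fin (h + 1)) :
    spread b u (b (evIdx h e)) = u e := by
  simp [spread, ← pairing_zero]

@[simp]
theorem spread_odIdx (u : Fin (h + 1) → ℕ) (e : Fin (h + 1)) :
    spread b u (b (odIdx h e)) = 0 := by
  simp [spread, ← pairing_one]

theorem pairSums_spread (u : Fin (h + 1) → ℕ) : pairSums b (spread b u) = u := by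
  ext e
  simp [pairSums]

theorem spread_le {u : Fin (h + 1) → ℕ} {m : ℕ} (hu : ∀ e, u e ≤ m) (x : Fin (2 * h + 2)) :
    spread b u x ≤ m := by
  unfold spread
  split_ifs
  exacts [hu _, Nat.zero_le _]

end Pairing

section PeriodMatrix

variable {h d : ℕ} (b : Equiv.Perm (Fin (2 * h + 2)))

def spreadIdx (hd : 2 ≤ d) {N : ℕ} (u : Fin (h + 1) → ℕ) (hu : ∀ e, u e ≤ d - 2)
    (hN : ∑ e, u e = N) : IdxSet h d N :=
  ⟨fun x => ⟨spread b u x, by have := spread_le b hu x; omega⟩, by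
    rw [← hN, ← sum_pairSums b, pairSums_spread]⟩

@[simp]
theorem spreadIdx_apply (hd : 2 ≤ d) {N : ℕ} (u : Fin (h + 1) → ℕ) (hu : ∀ e, u e ≤ d - 2)
    (hN : ∑ e, u e = N) (x : Fin (2 * h + 2)) :
    ((spreadIdx b hd u hu hN).1 x : ℕ) = spread b u x :=
  rfl

variable (d) (a : Fin (h + 1) → ℕ)

noncomputable def columnOfPairSums (c : Fin (h + 1) → ℕ) :
    IdxSet h d (h * d - (2 * h + 2)) → ℂ := fun i =>
  if ∀ e, pairSums b (fun x => (i.1 x : ℕ)) e + c e = d - 2 then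
    zeta2d d ^ ∑ e, ((i.1 (b (evIdx h e)) : ℕ) + 1) * (1 + 2 * a e)
  else 0

theorem pmat_pvec_col (j : IdxSet h d d) :
    (pmat h d (pvec h d a b)).col j =
      zeta2d d ^ (∑ e, (j.1 (b (evIdx h e)) : ℕ) * (1 + 2 * a e)) •
        columnOfPairSums d b a (pairSums b fun x => (j.1 x : ℕ)) := by
  ext i
  simp only [col_apply, pmat, of_apply, pvec, columnOfPairSums, Pi.smul_apply, smul_eq_mul]
  by_cases hcond : ∀ e, pairSums b (fun x => (i.1 x : ℕ)) e +
      pairSums b (fun x => (j.1 x : ℕ)) e = d - 2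
  · rw [if_pos hcond, if_pos fun e => by have := hcond e; simp only [pairSums] at this; omega,
      ← pow_add, ← sum_add_distrib]
    exact congrArg _ (sum_congr rfl fun e _ => by ring)
  · rw [if_neg hcond, if_neg fun h => hcond fun e => by have := h e; simp only [pairSums]; omega,
      mul_zero]

theorem columnOfPairSums_eq_zero {c : Fin (h + 1) → ℕ} {e : Fin (h + 1)} (he : d - 2 < c e) :
    columnOfPairSums d b a c = 0 := by
  ext i
  exact if_neg fun hc => by have := hc e; omega

theorem columnOfPairSums_apply_ne_zero_iff (hd : 2 ≤ d) {c : Fin (h + 1) → ℕ}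
    (hc : c ∈ boundedTuples (h + 1) d) (c' : Fin (h + 1) → ℕ) :
    columnOfPairSums d b a c' (spreadIdx b hd (fun e => d - 2 - c e) (fun _ => Nat.sub_le _ _)
      (sum_tsub_of_mem_boundedTuples hd hc)) ≠ 0 ↔ c' = c := by
  have hle := (mem_boundedTuples.1 hc).2
  simp only [columnOfPairSums, spreadIdx_apply, pairSums, spread_evIdx, spread_odIdx, add_zero]
  split_ifs with hcond
  · simp only [ne_eq, pow_eq_zero_iff', zeta2d, Complex.exp_ne_zero, false_and,
      not_false_eq_true, true_iff]
    ext e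
    have := hcond e
    have := hle e
    omega
  · simp only [ne_eq, not_true_eq_false, false_iff]
    rintro rfl
    exact hcond fun e => by have := hle e; omega

theorem rank_pmat_pvec (hd : 3 ≤ d) :
    (pmat h d (pvec h d a b)).rank = #(boundedTuples (h + 1) d) := by
  have hd2 : 2 ≤ d := by omega
  have hsum (j : IdxSet h d d) : ∑ e, pairSums b (fun x => (j.1 x : ℕ)) e = d :=
    (sum_pairSums b _).trans j.2
  refine rank_eq_card_of_col_eq_smul _ (columnOfPairSums d b a) _ _
    (fun _ => pow_ne_zero _ (Complex.exp_ne_zero _)) (pmat_pvec_col d b a) _ ?_ ?_ ?_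
  · intro j hj
    obtain ⟨e, he⟩ : ∃ e, d - 2 < pairSums b (fun x => (j.1 x : ℕ)) e := by
      simpa [mem_boundedTuples, hsum] using hj
    exact columnOfPairSums_eq_zero d b a he
  · intro c hc
    obtain ⟨hcsum, hcle⟩ := mem_boundedTuples.1 hc
    exact ⟨spreadIdx b hd2 c hcle hcsum, by simp only [spreadIdx_apply, pairSums_spread]⟩
  · refine linearIndependent_of_diag_apply_ne_zero _
      (fun c => spreadIdx b hd2 (fun e => d - 2 - c.1 e) (fun _ => Nat.sub_le _ _)
        (sum_tsub_of_mem_boundedTuples hd2 c.2)) (fun c => ?_) (fun c c' hne => ?_)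
    · exact (columnOfPairSums_apply_ne_zero_iff d b a hd2 c.2 c).2 rfl
    · by_contra hc'
      exact hne (Subtype.ext ((columnOfPairSums_apply_ne_zero_iff d b a hd2 c.2 c').1 hc'))

end PeriodMatrix

theorem rank_pmat_linear_cycle_general (h d : ℕ) (hd : 3 ≤ d)
    (a : Fin (h + 1) → Fin d) (b : Equiv.Perm (Fin (2 * h + 2))) :
    ((pmat h d (pvec h d (fun e => (a e : ℕ)) b)).rank : ℤ)
      = ((h + d).choose d : ℤ) - ((h : ℤ) + 1) ^ 2 := by
  have hcard := card_boundedTuples_add_sq (h + 1) d hd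
  rw [show h + 1 + d - 1 = h + d by omega] at hcard
  rw [rank_pmat_pvec d b _ hd, ← hcard]
  push_cast
  ring

/-- For `nd ≥ 2n+4` (with `n = 2h` even, `n ≥ 2`, `d ≥ 3`), the rank of the period matrix
of any linear cycle `ℙ^{n/2}_{a,b}` equals `binom(n/2+d, d) − (n/2+1)²`. -/
theorem rank_pmat_linear_cycle (h d : ℕ) (hh : 1 ≤ h) (hd : 3 ≤ d)
    (hnd : 2 * (2 * h) + 4 ≤ (2 * h) * d)
    (a : Fin (h + 1) → Fin d) (b : Equiv.Perm (Fin (2 * h + 2))) :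
    ((pmat h d (pvec h d (fun e => (a e : ℕ)) b)).rank : ℤ)
      = ((h + d).choose d : ℤ) - ((h : ℤ) + 1) ^ 2 :=
  rank_pmat_linear_cycle_general h d hd a b
end

section
/- Let (n,d,m) be one of the triples: (2,d,−1) with 5 ≤ d ≤ 14; (4,4,−1), (4,5,−1), (4,6,−1), (4,5,0), (4,6,0); (6,3,−1), (6,4,−1), (6,4,0); (8,3,−1), (8,3,0); (10,3,−1), (10,3,0), (10,3,1). Then for all nonzero integers r and ř, regarding the period matrices as linear maps ℂ^{I_d} → ℂ^{I_{(n/2)d−n−2}}, one has ker(r·[P_{i+j}] + ř·[(P̌_m)_{i+j}]) = ker[P_{i+j}] ∩ ker[(P̌_m)_{i+j}]; in particular this kernel does not depend on r and ř. -/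
open Finset Matrix

/-- The list of triples `(n,d,m)` of Theorem `27.03.17`, encoded as `(h, d, μ)` with
`n = 2h` and `μ = m+1`. -/
def TripleList (h d μ : ℕ) : Prop :=
  (h = 1 ∧ 5 ≤ d ∧ d ≤ 14 ∧ μ = 0) ∨
  (h = 2 ∧ ((d = 4 ∧ μ = 0) ∨ (d = 5 ∧ μ = 0) ∨ (d = 6 ∧ μ = 0) ∨
            (d = 5 ∧ μ = 1) ∨ (d = 6 ∧ μ = 1))) ∨
  (h = 3 ∧ ((d = 3 ∧ μ = 0) ∨ (d = 4 ∧ μ = 0) ∨ (d = 4 ∧ μ = 1))) ∨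
  (h = 4 ∧ d = 3 ∧ (μ = 0 ∨ μ = 1)) ∨
  (h = 5 ∧ d = 3 ∧ (μ = 0 ∨ μ = 1 ∨ μ = 2))

/-!
Write `τ_e(i) = i_{2e} + i_{2e+1}` for a row index `i`. The entry of `[p^{a,id}]` in row `i` and
column `j` vanishes unless `τ(i) + τ(j) = d - 2`, and is then `ζ^{E_a(i)} ζ^{Σ_e j_{2e}(1+2a_e)}`
with `E_a(i) = Σ_e (i_{2e}+1)(1+2a_e)`. So the `i`-th coordinate of `[p^{a,id}] x` is
`ζ^{E_a(i)} F_a(τ(i))`, where `F_a` does not depend on `i` beyond `τ(i)`.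

Moving one unit from `i_{2e₀+1}` to `i_{2e₀}` keeps `τ` and raises `E_a` by `1 + 2a_{e₀}`: by `1`
for `P` and, when `e₀ > m`, by `3` for `P̌_m`. The two rows give `r ζ^E F + ř ζ^Ě F̌ = 0` and
`r ζ^{E+1} F + ř ζ^{Ě+3} F̌ = 0`, which force `F = F̌ = 0` since `ζ ≠ ζ³`. An `e₀ > m` with
`τ_{e₀}(i) > 0` exists whenever the row degree `(n/2)d - n - 2` exceeds `(m+1)(d-2)`.
-/

lemma isPrimitiveRoot_zeta2d {d : ℕ} (hd : d ≠ 0) : IsPrimitiveRoot (zeta2d d) (2 * d) := by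
  simpa [zeta2d] using Complex.isPrimitiveRoot_exp (2 * d) (by omega)

lemma zeta2d_ne_zero (d : ℕ) : zeta2d d ≠ 0 := Complex.exp_ne_zero _

lemma zeta2d_pow_one_ne_pow_three {d : ℕ} (hd : 2 ≤ d) : zeta2d d ^ 1 ≠ zeta2d d ^ 3 := fun H =>
  absurd ((isPrimitiveRoot_zeta2d (by omega)).pow_inj (by omega) (by omega) H) (by omega)

lemma eq_zero_and_eq_zero_of_pow_shift {K : Type*} [CommRing K] [IsDomain K]
    {ζ r s F G : K} {E E' k l : ℕ} (hζ : ζ ≠ 0) (hkl : ζ ^ k ≠ ζ ^ l) (hr : r ≠ 0) (hs : s ≠ 0)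
    (h₁ : r * (ζ ^ E * F) + s * (ζ ^ E' * G) = 0)
    (h₂ : r * (ζ ^ (E + k) * F) + s * (ζ ^ (E' + l) * G) = 0) :
    F = 0 ∧ G = 0 := by
  have hG : (s * ζ ^ E' * (ζ ^ l - ζ ^ k)) * G = 0 := by
    linear_combination h₂ - ζ ^ k * h₁
  obtain rfl : G = 0 := (mul_eq_zero.mp hG).resolve_left
    (mul_ne_zero (mul_ne_zero hs (pow_ne_zero _ hζ)) (sub_ne_zero.mpr hkl.symm))
  have hF : (r * ζ ^ E) * F = 0 := by linear_combination h₁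
  exact ⟨(mul_eq_zero.mp hF).resolve_left (mul_ne_zero hr (pow_ne_zero _ hζ)), rfl⟩

section PairSums

variable {h : ℕ}

lemma evIdx_injective : Function.Injective (evIdx h) := fun e e' H => by
  have := congrArg Fin.val H; simp only [evIdx] at this; exact Fin.ext (by omega)

lemma odIdx_injective : Function.Injective (odIdx h) := fun e e' H => by
  have := congrArg Fin.val H; simp only [odIdx] at this; exact Fin.ext (by omega)

lemma evIdx_ne_odIdx (e e' : Fin (h + 1)) : evIdx h e ≠ odIdx h e' := fun H => by
  have := congrArg Fin.val H; simp only [evIdx, odIdx] at this; omega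

def pairSum (h : ℕ) (f : Fin (2 * h + 2) → ℕ) (e : Fin (h + 1)) : ℕ :=
  f (evIdx h e) + f (odIdx h e)

def cycleExp (h : ℕ) (a : Fin (h + 1) → ℕ) (f : Fin (2 * h + 2) → ℕ) : ℕ :=
  ∑ e, (f (evIdx h e) + 1) * (1 + 2 * a e)

lemma sum_eq_sum_evIdx_add_odIdx {M : Type*} [AddCommMonoid M] (f : Fin (2 * h + 2) → M) :
    ∑ k, f k = ∑ e : Fin (h + 1), (f (evIdx h e) + f (odIdx h e)) := by
  let g : Fin (h + 1) × Fin 2 ≃ Fin (2 * h + 2) := finProdFinEquiv.trans (finCongr (by ring))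
  rw [← g.sum_comp, Fintype.sum_prod_type]
  refine sum_congr rfl fun e _ => ?_
  rw [Fin.sum_univ_two]
  congr 2 <;> ext <;> simp [g, evIdx, odIdx, finProdFinEquiv, add_comm]

lemma update_update_evIdx {α : Type*} (f : Fin (2 * h + 2) → α) (e₀ e : Fin (h + 1)) (u v : α) :
    Function.update (Function.update f (evIdx h e₀) u) (odIdx h e₀) v (evIdx h e) =
      if e = e₀ then u else f (evIdx h e) := by
  simp only [Function.update_of_ne (evIdx_ne_odIdx e e₀), Function.update_apply,
    evIdx_injective.eq_iff]

lemma update_update_odIdx {α : Type*} (f : Fin (2 * h + 2) → α) (e₀ e : Fin (h + 1)) (u v : α) :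
    Function.update (Function.update f (evIdx h e₀) u) (odIdx h e₀) v (odIdx h e) =
      if e = e₀ then v else f (odIdx h e) := by
  simp only [Function.update_apply, odIdx_injective.eq_iff, (evIdx_ne_odIdx e₀ e).symm,
    if_false]

lemma pvec_refl_apply (d : ℕ) (a : Fin (h + 1) → ℕ) (f : Fin (2 * h + 2) → ℕ) :
    pvec h d a (Equiv.refl _) f =
      if ∀ e, pairSum h f e = d - 2 then zeta2d d ^ cycleExp h a f else 0 := rfl

end PairSums

namespace IdxSet

variable {h d N : ℕ}

def tuple (i : IdxSet h d N) : Fin (2 * h + 2) → ℕ := fun k => i.1 k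

lemma sum_pairSum (i : IdxSet h d N) : ∑ e, pairSum h i.tuple e = N :=
  (sum_eq_sum_evIdx_add_odIdx _).symm.trans i.2

def setPair (i : IdxSet h d N) (e₀ : Fin (h + 1)) (u v : Fin (d - 1))
    (huv : u.1 + v.1 = pairSum h i.tuple e₀) : IdxSet h d N :=
  ⟨Function.update (Function.update i.1 (evIdx h e₀) u) (odIdx h e₀) v, by
    refine (sum_eq_sum_evIdx_add_odIdx _).trans (Eq.trans ?_ i.sum_pairSum)
    refine sum_congr rfl fun e _ => ?_
    rw [update_update_evIdx, update_update_odIdx]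
    split_ifs with he
    · rw [huv, he]
    · rfl⟩

lemma pairSum_setPair (i : IdxSet h d N) (e₀ : Fin (h + 1)) (u v : Fin (d - 1))
    (huv : u.1 + v.1 = pairSum h i.tuple e₀) :
    pairSum h (i.setPair e₀ u v huv).tuple = pairSum h i.tuple := by
  ext e
  simp only [pairSum, tuple, setPair, update_update_evIdx, update_update_odIdx]
  split_ifs with he
  · rw [huv, he]; rfl
  · rfl

lemma cycleExp_setPair_of_succ (i : IdxSet h d N) (a : Fin (h + 1) → ℕ) (e₀ : Fin (h + 1))
    (u v u' v' : Fin (d - 1)) (huv : u.1 + v.1 = pairSum h i.tuple e₀)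
    (huv' : u'.1 + v'.1 = pairSum h i.tuple e₀) (hu : u'.1 = u.1 + 1) :
    cycleExp h a (i.setPair e₀ u' v' huv').tuple =
      cycleExp h a (i.setPair e₀ u v huv).tuple + (1 + 2 * a e₀) := by
  rw [cycleExp, cycleExp, ← Fintype.sum_ite_eq' e₀ (fun e => 1 + 2 * a e), ← sum_add_distrib]
  refine sum_congr rfl fun e _ => ?_
  simp only [tuple, setPair, update_update_evIdx]
  split_ifs with he
  · subst he; rw [hu]; ring
  · rfl

lemma exists_le_pairSum_pos (μ : ℕ) (i : IdxSet h d N) (hle : ∀ e, pairSum h i.tuple e ≤ d - 2)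
    (hN : μ * (d - 2) < N) : ∃ e₀ : Fin (h + 1), μ ≤ e₀.1 ∧ 0 < pairSum h i.tuple e₀ := by
  by_contra! H
  have : N ≤ μ * (d - 2) := calc
    N = ∑ e, pairSum h i.tuple e := i.sum_pairSum.symm
    _ ≤ ∑ e : Fin (h + 1), if e.1 < μ then d - 2 else 0 := sum_le_sum fun e _ => by
      split_ifs with he
      · exact hle e
      · exact H e (not_lt.1 he)
    _ = #{e : Fin (h + 1) | e.1 < μ} * (d - 2) := by
      rw [sum_ite, sum_const_zero, add_zero, sum_const, smul_eq_mul]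
    _ ≤ μ * (d - 2) := by
      rw [Fin.card_filter_val_lt]; exact Nat.mul_le_mul_right _ (min_le_right _ _)
  omega

lemma exists_pairSum_eq_cycleExp_succ (i : IdxSet h d N) (e₀ : Fin (h + 1))
    (hpos : 0 < pairSum h i.tuple e₀) (hle : pairSum h i.tuple e₀ ≤ d - 2) :
    ∃ lo hi : IdxSet h d N, pairSum h lo.tuple = pairSum h i.tuple ∧
      pairSum h hi.tuple = pairSum h i.tuple ∧
      ∀ a, cycleExp h a hi.tuple = cycleExp h a lo.tuple + (1 + 2 * a e₀) :=
  ⟨i.setPair e₀ ⟨0, by omega⟩ ⟨pairSum h i.tuple e₀, by omega⟩ (zero_add _),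
    i.setPair e₀ ⟨1, by omega⟩ ⟨pairSum h i.tuple e₀ - 1, by omega⟩ (by dsimp only; omega),
    pairSum_setPair .., pairSum_setPair .., fun _ => cycleExp_setPair_of_succ (hu := rfl) ..⟩

end IdxSet

section PeriodMatrix

variable {h d : ℕ}

noncomputable def fiberSum (h d : ℕ) (a : Fin (h + 1) → ℕ) (x : IdxSet h d d → ℂ)
    (τ : Fin (h + 1) → ℕ) : ℂ :=
  ∑ j : IdxSet h d d, if ∀ e, τ e + pairSum h j.tuple e = d - 2 then
    zeta2d d ^ (∑ e, j.tuple (evIdx h e) * (1 + 2 * a e)) * x j else 0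

lemma fiberSum_eq_zero_of_lt (a : Fin (h + 1) → ℕ) (x : IdxSet h d d → ℂ)
    {τ : Fin (h + 1) → ℕ} {e : Fin (h + 1)} (he : d - 2 < τ e) : fiberSum h d a x τ = 0 :=
  sum_eq_zero fun j _ => if_neg fun H => by have := H e; omega

lemma pmat_pvec_mulVec_apply (a : Fin (h + 1) → ℕ) (x : IdxSet h d d → ℂ)
    (i : IdxSet h d (h * d - (2 * h + 2))) :
    (pmat h d (pvec h d a (Equiv.refl _)) *ᵥ x) i =
      zeta2d d ^ cycleExp h a i.tuple * fiberSum h d a x (pairSum h i.tuple) := by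
  rw [fiberSum, mul_sum]
  refine sum_congr rfl fun j _ => ?_
  have hpair : pairSum h (i.tuple + j.tuple) = pairSum h i.tuple + pairSum h j.tuple := by
    ext e; simp only [pairSum, Pi.add_apply]; ring
  have hexp : cycleExp h a (i.tuple + j.tuple) =
      cycleExp h a i.tuple + ∑ e, j.tuple (evIdx h e) * (1 + 2 * a e) := by
    rw [cycleExp, cycleExp, ← sum_add_distrib]
    exact sum_congr rfl fun e _ => by simp only [Pi.add_apply]; ring
  change pvec h d a (Equiv.refl _) (i.tuple + j.tuple) * x j = _
  simp only [pvec_refl_apply, hpair, hexp, Pi.add_apply]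
  split_ifs <;> ring

end PeriodMatrix

theorem pmat_pvec_mulVec_eq_zero_of_smul_add_smul {h d μ : ℕ}
    (hN : μ * (d - 2) < h * d - (2 * h + 2)) {a a' : Fin (h + 1) → ℕ}
    (ha : ∀ e : Fin (h + 1), μ ≤ e.1 → a e = 0) (ha' : ∀ e : Fin (h + 1), μ ≤ e.1 → a' e = 1)
    {r s : ℂ} (hr : r ≠ 0) (hs : s ≠ 0) {x : IdxSet h d d → ℂ}
    (hx : r • (pmat h d (pvec h d a (Equiv.refl _)) *ᵥ x) +
      s • (pmat h d (pvec h d a' (Equiv.refl _)) *ᵥ x) = 0) :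
    pmat h d (pvec h d a (Equiv.refl _)) *ᵥ x = 0 ∧
      pmat h d (pvec h d a' (Equiv.refl _)) *ᵥ x = 0 := by
  have hrow (i : IdxSet h d (h * d - (2 * h + 2))) :
      r * (zeta2d d ^ cycleExp h a i.tuple * fiberSum h d a x (pairSum h i.tuple)) +
        s * (zeta2d d ^ cycleExp h a' i.tuple * fiberSum h d a' x (pairSum h i.tuple)) = 0 := by
    simpa only [Pi.add_apply, Pi.smul_apply, smul_eq_mul, Pi.zero_apply,
      pmat_pvec_mulVec_apply] using congrFun hx i
  suffices H : ∀ i : IdxSet h d (h * d - (2 * h + 2)),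
      fiberSum h d a x (pairSum h i.tuple) = 0 ∧ fiberSum h d a' x (pairSum h i.tuple) = 0 by
    constructor <;> ext i <;> simp [pmat_pvec_mulVec_apply, H i]
  intro i
  by_cases hle : ∀ e, pairSum h i.tuple e ≤ d - 2
  swap
  · obtain ⟨e, he⟩ := not_forall.1 hle
    exact ⟨fiberSum_eq_zero_of_lt _ _ (not_le.1 he), fiberSum_eq_zero_of_lt _ _ (not_le.1 he)⟩
  have hd : 2 ≤ d := by
    by_contra! hd
    interval_cases d <;> omega
  obtain ⟨e₀, hμ, hpos⟩ := i.exists_le_pairSum_pos μ hle hN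
  obtain ⟨lo, hi, hlo, hhi, hexp⟩ := i.exists_pairSum_eq_cycleExp_succ e₀ hpos (hle e₀)
  have h₁ := hrow lo
  have h₂ := hrow hi
  rw [hlo] at h₁
  rw [hhi, hexp, hexp, ha e₀ hμ, ha' e₀ hμ] at h₂
  exact eq_zero_and_eq_zero_of_pow_shift (zeta2d_ne_zero d) (zeta2d_pow_one_ne_pow_three hd)
    hr hs h₁ h₂

lemma TripleList.mul_sub_two_lt {h d μ : ℕ} (hin : TripleList h d μ) :
    μ * (d - 2) < h * d - (2 * h + 2) := by
  rcases hin with ⟨rfl, hd₁, hd₂, rfl⟩ |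
      ⟨rfl, ⟨rfl, rfl⟩ | ⟨rfl, rfl⟩ | ⟨rfl, rfl⟩ | ⟨rfl, rfl⟩ | ⟨rfl, rfl⟩⟩ |
      ⟨rfl, ⟨rfl, rfl⟩ | ⟨rfl, rfl⟩ | ⟨rfl, rfl⟩⟩ | ⟨rfl, rfl, rfl | rfl⟩ |
      ⟨rfl, rfl, rfl | rfl | rfl⟩ <;> omega

/-- For the triples `(n,d,m)` of Theorem `27.03.17` and all nonzero integers `r, ř`,
the kernel of `r·[P_{i+j}] + ř·[(P̌_m)_{i+j}]` (as a linear map `ℂ^{I_d} → ℂ^{I_{(n/2)d−n−2}}`)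
equals `ker[P_{i+j}] ∩ ker[(P̌_m)_{i+j}]`; in particular it does not depend on `r, ř`. -/
theorem ker_combination_eq_inter (h d μ : ℕ) (hin : TripleList h d μ)
    (r rc : ℤ) (hr : r ≠ 0) (hrc : rc ≠ 0) :
    LinearMap.ker ((r : ℂ) • pmat h d (Pvec h d)
        + (rc : ℂ) • pmat h d (PcheckVec h d μ)).mulVecLin
      = LinearMap.ker (pmat h d (Pvec h d)).mulVecLin ⊓
        LinearMap.ker (pmat h d (PcheckVec h d μ)).mulVecLin := by
  ext x
  simp only [Submodule.mem_inf, LinearMap.mem_ker, mulVecLin_apply, add_mulVec, smul_mulVec]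
  constructor
  · exact pmat_pvec_mulVec_eq_zero_of_smul_add_smul hin.mul_sub_two_lt (fun _ _ => rfl)
      (fun _ he => if_neg (not_lt.2 he)) (Int.cast_ne_zero.2 hr) (Int.cast_ne_zero.2 hrc)
  · rintro ⟨h₁, h₂⟩
    rw [h₁, h₂, smul_zero, smul_zero, add_zero]
end

section
/- Let d = 3 and set H_n(m) := rank([P_{i+j}] + [(P̌_m)_{i+j}]). Then: for n = 4, H_4(m) = 1 for m = 2, 1, 0, −1; for n = 6: H_6(3) = 4, H_6(2) = 4, H_6(1) = 6, H_6(0) = 7, H_6(−1) = 8; for n = 8: H_8(4) = 10, H_8(3) = 10, H_8(2) = 16, H_8(1) = 19, H_8(0) = 20, H_8(−1) = 20; for n = 10: H_10(5) = 20, H_10(4) = 20, H_10(3) = 32, H_10(2) = 38, H_10(1) = 40, H_10(0) = 40, H_10(−1) = 40; for n = 12: H_12(6) = 35, H_12(5) = 35, H_12(4) = 55, H_12(3) = 65, H_12(2) = 69, H_12(1) = 70, H_12(0) = 70, H_12(−1) = 70. -/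
open Finset Matrix

/-- `H^d_n(m)`: the rank of `[P_{i+j}] + [(P̌_m)_{i+j}]`, with `n = 2h` and `μ = m+1`. -/
noncomputable def sumRank (h d μ : ℕ) : ℕ :=
  (pmat h d (Pvec h d) + pmat h d (PcheckVec h d μ)).rank

/-!
For `d = 3` all exponents are `0` or `1`, and `p_{i+j} ≠ 0` forces each pair `(2e, 2e+1)` of
`i + j` to contain exactly one `1`. Hence a column `j` meeting a nonzero entry has one `1` in each
pair of a 3-set `T` of pairs, the rows it meets have one `1` in each pair outside `T`, and the
period of a linear cycle with pair weights `w e = ζ_{2d}^(1 + 2 a_e)` factors as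
`(∏ w) · (monomial of j on T) · (monomial of i off T)`. So the sum of the period matrices of two
such cycles is block diagonal over the 3-sets `T`, each block being `a_T ⊗ u_T + b_T ⊗ v_T`. A
block has rank one when the two weights agree on `T` (then `a_T ∥ b_T`) or off `T` (then
`u_T = v_T`), and rank two otherwise, since a `2 × 2` minor factors as
`∏ w · ∏ w' · (w' E - w E) · (w' f - w f)`. For `P` and `P̌_m` the weights are `ζ₆` and
`ζ₆³ = -1`, differing exactly on the pairs `e ≥ m + 1`, so the table is a count of 3-sets.
-/

section LinearAlgebra

open Submodule

variable {F M : Type*} [Field F] [AddCommGroup M] [Module F M]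

theorem linearIndepOn_of_fibers {ι m L : Type*} {v : ι → m → F} {s : Set ι}
    (β : ι → L) (ρ : m → L) (hsupp : ∀ k ∈ s, ∀ r, v k r ≠ 0 → ρ r = β k)
    (hfib : ∀ ℓ, LinearIndepOn F v {k ∈ s | β k = ℓ}) : LinearIndepOn F v s := by
  classical
  rw [linearIndepOn_iff']
  intro t g hts hsum i hi
  have hfiber_sum : ∑ k ∈ t.filter (β · = β i), g k • v k = 0 := by
    funext r
    have hterm : ∀ k ∈ t, (if β k = β i then g k * v k r else 0)
        = if ρ r = β i then g k * v k r else 0 := by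
      intro k hk
      by_cases hv : v k r = 0
      · simp [hv]
      · rw [hsupp k (hts hk) r hv]
    have hr := congr_fun hsum r
    simp only [Finset.sum_apply, Pi.smul_apply, smul_eq_mul, Pi.zero_apply] at hr ⊢
    rw [Finset.sum_filter, Finset.sum_congr rfl hterm, ← ite_sum_zero, hr, ite_self]
  exact linearIndepOn_iff'.1 (hfib (β i)) _ g
    (fun k hk => by simpa using ⟨hts (Finset.mem_filter.1 hk).1, (Finset.mem_filter.1 hk).2⟩)
    hfiber_sum i (Finset.mem_filter.2 ⟨hi, rfl⟩)

theorem LinearIndependent.pair_smul_add {u v : M} (huv : LinearIndependent F ![u, v])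
    {a b c d : F} (hdet : a * d - b * c ≠ 0) :
    LinearIndependent F ![a • u + b • v, c • u + d • v] := by
  rw [LinearIndependent.pair_iff] at huv ⊢
  intro s t hst
  obtain ⟨hu, hv⟩ := huv (s * a + t * c) (s * b + t * d) (by rw [← hst]; module)
  exact ⟨mul_left_cancel₀ hdet (by linear_combination d * hu - c * hv),
    mul_left_cancel₀ hdet (by linear_combination a * hv - b * hu)⟩

theorem span_pair_le_span_pair_smul_add (u v : M) {a b c d : F} (hdet : a * d - b * c ≠ 0) :
    span F {u, v} ≤ span F {a • u + b • v, c • u + d • v} := by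
  have hmem : ∀ z : M, (∃ p q : F, (a * d - b * c) • z = p • (a • u + b • v) + q • (c • u + d • v))
      → z ∈ span F {a • u + b • v, c • u + d • v} := by
    rintro z ⟨p, q, hz⟩
    rw [← one_smul F z, ← inv_mul_cancel₀ hdet, mul_smul, hz]
    exact smul_mem _ _ (add_mem (smul_mem _ _ (subset_span (by simp)))
      (smul_mem _ _ (subset_span (by simp))))
  rw [span_le, Set.insert_subset_iff, Set.singleton_subset_iff]
  exact ⟨hmem u ⟨d, -b, by module⟩, hmem v ⟨-c, a, by module⟩⟩

theorem Matrix.rank_eq_card_of_linearIndepOn {m n ι : Type*} [Fintype n] (A : Matrix m n F)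
    {v : ι → m → F} {s : Finset ι} (hcol : ∀ k ∈ s, v k ∈ Set.range A.col)
    (hli : LinearIndepOn F v s) (hspan : ∀ j, A.col j ∈ span F (v '' s)) :
    A.rank = s.card := by
  have hspan_eq : span F (Set.range A.col) = span F (Set.range fun k : (s : Set ι) => v k) := by
    rw [← Set.image_eq_range]
    refine le_antisymm (span_le.2 (Set.range_subset_iff.2 hspan)) (span_mono ?_)
    rintro _ ⟨k, hk, rfl⟩
    exact hcol k hk
  rw [Matrix.rank_eq_finrank_span_cols, hspan_eq, finrank_span_eq_card hli]
  simp

end LinearAlgebra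

theorem isPrimitiveRoot_zeta2d_three : IsPrimitiveRoot (zeta2d 3) 6 := by
  convert Complex.isPrimitiveRoot_exp 6 (by norm_num) using 2
  simp only [zeta2d]
  norm_num

theorem IsPrimitiveRoot.pow_add_pow_add_two_mul_ne_zero {ζ : ℂ} (hζ : IsPrimitiveRoot ζ 6)
    (m k : ℕ) : ζ ^ m + ζ ^ (m + 2 * k) ≠ 0 := by
  rw [pow_add, ← mul_one_add, add_comm]
  refine mul_ne_zero (pow_ne_zero _ (hζ.ne_zero (by norm_num))) fun hzero => ?_
  have hneg : ζ ^ (2 * k) = -1 := by linear_combination hzero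
  have hdvd : 6 ∣ 2 * k * 2 := (hζ.pow_eq_one_iff_dvd _).1 (by rw [pow_mul, hneg]; norm_num)
  rw [(hζ.pow_eq_one_iff_dvd _).2 (by omega)] at hneg
  norm_num at hneg

namespace FermatPeriod

variable {h : ℕ}

def pairEquiv (h : ℕ) : Fin (h + 1) × Fin 2 ≃ Fin (2 * h + 2) where
  toFun p := ⟨2 * p.1 + p.2, by omega⟩
  invFun k := (⟨k / 2, by omega⟩, ⟨k % 2, by omega⟩)
  left_inv := by
    rintro ⟨e, b⟩
    ext <;> dsimp <;> omega
  right_inv k := by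
    ext
    dsimp
    omega

theorem pairEquiv_zero (e : Fin (h + 1)) : pairEquiv h (e, 0) = evIdx h e := rfl

theorem pairEquiv_one (e : Fin (h + 1)) : pairEquiv h (e, 1) = odIdx h e := rfl

theorem sum_eq_sum_pairs {M : Type*} [AddCommMonoid M] (f : Fin (2 * h + 2) → M) :
    ∑ k, f k = ∑ e, (f (evIdx h e) + f (odIdx h e)) := by
  rw [← (pairEquiv h).sum_comp, Fintype.sum_prod_type]
  simp [Fin.sum_univ_two, pairEquiv_zero, pairEquiv_one]

def pairSum (x : Fin (2 * h + 2) → Fin 2) (e : Fin (h + 1)) : ℕ :=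
  x (evIdx h e) + x (odIdx h e)

def PairPattern (P : Finset (Fin (h + 1))) (x : Fin (2 * h + 2) → Fin 2) : Prop :=
  ∀ e, pairSum x e = if e ∈ P then 1 else 0

instance (P : Finset (Fin (h + 1))) (x : Fin (2 * h + 2) → Fin 2) :
    Decidable (PairPattern P x) :=
  Fintype.decidableForallFintype

def pairSupport (x : Fin (2 * h + 2) → Fin 2) : Finset (Fin (h + 1)) :=
  {e | pairSum x e ≠ 0}

section

variable {P : Finset (Fin (h + 1))} {x : Fin (2 * h + 2) → Fin 2}

theorem PairPattern.sum_eq_card (hx : PairPattern P x) : ∑ k, (x k : ℕ) = P.card := by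
  rw [sum_eq_sum_pairs]
  change ∑ e, pairSum x e = _
  simp [Finset.sum_congr rfl fun e _ => hx e]

theorem PairPattern.pairSupport_eq (hx : PairPattern P x) : pairSupport x = P := by
  ext e
  simp [pairSupport, hx e]

theorem PairPattern.evIdx_eq_zero (hx : PairPattern P x) {e : Fin (h + 1)} (he : e ∉ P) :
    (x (evIdx h e) : ℕ) = 0 := by
  have := hx e
  simp only [pairSum, he, if_false] at this
  omega

end

-- One `1` in each pair `e ∈ P`, in the even slot iff `e ∈ S`.
def pairTuple (P S : Finset (Fin (h + 1))) (k : Fin (2 * h + 2)) : Fin 2 :=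
  let p := (pairEquiv h).symm k
  if p.1 ∈ P ∧ (p.2 = 0 ↔ p.1 ∈ S) then 1 else 0

section

variable (P S : Finset (Fin (h + 1))) (e : Fin (h + 1))

theorem pairTuple_evIdx : (pairTuple P S (evIdx h e) : ℕ) = if e ∈ P ∧ e ∈ S then 1 else 0 := by
  simp only [pairTuple, ← pairEquiv_zero, Fin.isValue, Equiv.symm_apply_apply, true_iff]
  split_ifs <;> rfl

theorem pairTuple_odIdx : (pairTuple P S (odIdx h e) : ℕ) = if e ∈ P ∧ e ∉ S then 1 else 0 := by
  simp only [pairTuple, ← pairEquiv_one, Fin.isValue, Equiv.symm_apply_apply, one_ne_zero,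
    false_iff]
  split_ifs <;> rfl

theorem pairPattern_pairTuple : PairPattern P (pairTuple P S) := by
  intro e
  rw [pairSum, pairTuple_evIdx, pairTuple_odIdx]
  by_cases hP : e ∈ P <;> by_cases hS : e ∈ S <;> simp [hP, hS]

end

def pairPeriod (d : ℕ) (w : Fin (h + 1) → ℂ) (c : Fin (2 * h + 2) → ℕ) : ℂ :=
  if ∀ e, c (evIdx h e) + c (odIdx h e) = d - 2 then ∏ e, w e ^ (c (evIdx h e) + 1) else 0

theorem pvec_refl_eq_pairPeriod (d : ℕ) (a : Fin (h + 1) → ℕ) :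
    pvec h d a (Equiv.refl _) = pairPeriod d fun e => zeta2d d ^ (1 + 2 * a e) := by
  funext c
  simp only [pvec, pairPeriod, Equiv.refl_apply, ← pow_mul, prod_pow_eq_pow_sum, mul_comm]

def pairMonomial (w : Fin (h + 1) → ℂ) (P : Finset (Fin (h + 1))) (x : Fin (2 * h + 2) → Fin 2) :
    ℂ :=
  if PairPattern P x then ∏ e ∈ P, w e ^ (x (evIdx h e) : ℕ) else 0

theorem pairMonomial_pairTuple (w : Fin (h + 1) → ℂ) (P S : Finset (Fin (h + 1))) :
    pairMonomial w P (pairTuple P S) = ∏ e ∈ P ∩ S, w e := by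
  rw [pairMonomial, if_pos (pairPattern_pairTuple P S), ← prod_ite_mem]
  refine prod_congr rfl fun e he => ?_
  by_cases hS : e ∈ S <;> simp [pairTuple_evIdx, he, hS]

theorem pairMonomial_congr {w w' : Fin (h + 1) → ℂ} {P : Finset (Fin (h + 1))}
    (hww' : ∀ e ∈ P, w e = w' e) :
    pairMonomial w P = pairMonomial w' P := by
  funext x
  simp only [pairMonomial]
  rw [prod_congr rfl fun e he => by rw [hww' e he]]

theorem pairSum_add_eq_one_iff (x y : Fin (2 * h + 2) → Fin 2) :
    (∀ e, pairSum x e + pairSum y e = 1) ↔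
      PairPattern (pairSupport y) y ∧ PairPattern (pairSupport y)ᶜ x := by
  have hP : ∀ e, e ∈ pairSupport y ↔ pairSum y e ≠ 0 := fun e => by simp [pairSupport]
  constructor
  · intro hc
    constructor <;> intro e <;> have := hc e <;> have := hP e <;>
      by_cases he : e ∈ pairSupport y <;>
      simp only [mem_compl, he, if_true, if_false, not_true, not_false_eq_true, true_iff,
        false_iff] at * <;> omega
  · rintro ⟨hy, hx⟩ e
    have := hy e; have := hx e
    by_cases he : e ∈ pairSupport y <;>
      simp only [mem_compl, he, if_true, if_false, not_true, not_false_eq_true] at * <;> omega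

theorem pairPeriod_three_add (w : Fin (h + 1) → ℂ) (x y : Fin (2 * h + 2) → Fin 2) :
    pairPeriod 3 w (fun k => x k + y k) =
      (∏ e, w e) * pairMonomial w (pairSupport y) y * pairMonomial w (pairSupport y)ᶜ x := by
  set P := pairSupport y
  have hcond : (∀ e, (x (evIdx h e) + y (evIdx h e) : ℕ) + (x (odIdx h e) + y (odIdx h e)) = 3 - 2)
      ↔ PairPattern P y ∧ PairPattern Pᶜ x := by
    rw [← pairSum_add_eq_one_iff]
    refine forall_congr' fun e => ?_
    unfold pairSum
    omega
  rw [pairPeriod, pairMonomial, pairMonomial]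
  by_cases hc : PairPattern P y ∧ PairPattern Pᶜ x
  swap
  · rw [if_neg (mt hcond.1 hc)]
    split_ifs with hy hx
    · exact absurd ⟨hy, hx⟩ hc
    all_goals ring
  have hP_part : ∏ e ∈ P, w e ^ ((x (evIdx h e) : ℕ) + y (evIdx h e) + 1) =
      (∏ e ∈ P, w e) * ∏ e ∈ P, w e ^ (y (evIdx h e) : ℕ) := by
    rw [← prod_mul_distrib]
    refine prod_congr rfl fun e he => ?_
    rw [hc.2.evIdx_eq_zero (by simpa using he), zero_add, pow_succ, mul_comm]
  have hPc_part : ∏ e ∈ Pᶜ, w e ^ ((x (evIdx h e) : ℕ) + y (evIdx h e) + 1) =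
      (∏ e ∈ Pᶜ, w e) * ∏ e ∈ Pᶜ, w e ^ (x (evIdx h e) : ℕ) := by
    rw [← prod_mul_distrib]
    refine prod_congr rfl fun e he => ?_
    rw [hc.1.evIdx_eq_zero (mem_compl.1 he), add_zero, pow_succ, mul_comm]
  rw [if_pos (hcond.2 hc), if_pos hc.1, if_pos hc.2, ← prod_mul_prod_compl P,
    ← prod_mul_prod_compl P w, hP_part, hPc_part]
  ring

abbrev RowIdx (h : ℕ) := IdxSet h 3 (h * 3 - (2 * h + 2))

def testRow (T S : Finset (Fin (h + 1))) (hT : T.card = 3) : RowIdx h :=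
  ⟨pairTuple Tᶜ S, by
    have hle : T.card ≤ h + 1 := by simpa using T.card_le_univ
    rw [(pairPattern_pairTuple Tᶜ S).sum_eq_card, card_compl, Fintype.card_fin]
    omega⟩

variable (w w' : Fin (h + 1) → ℂ)

def colVec (x : Fin (2 * h + 2) → Fin 2) : RowIdx h → ℂ :=
  fun r => pairPeriod 3 w (fun k => r.1 k + x k) + pairPeriod 3 w' (fun k => r.1 k + x k)

def rowVec (T : Finset (Fin (h + 1))) : RowIdx h → ℂ :=
  fun r => pairMonomial w Tᶜ r.1

theorem colVec_eq (x : Fin (2 * h + 2) → Fin 2) :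
    colVec w w' x =
      ((∏ e, w e) * pairMonomial w (pairSupport x) x) • rowVec w (pairSupport x) +
        ((∏ e, w' e) * pairMonomial w' (pairSupport x) x) • rowVec w' (pairSupport x) := by
  funext r
  simp only [colVec, rowVec, pairPeriod_three_add, Pi.add_apply, Pi.smul_apply, smul_eq_mul]

theorem colVec_pairTuple_empty (T : Finset (Fin (h + 1))) :
    colVec w w' (pairTuple T ∅) = (∏ e, w e) • rowVec w T + (∏ e, w' e) • rowVec w' T := by
  simp [colVec_eq, (pairPattern_pairTuple T ∅).pairSupport_eq, pairMonomial_pairTuple]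

theorem colVec_pairTuple_singleton {T : Finset (Fin (h + 1))} {E : Fin (h + 1)} (hE : E ∈ T) :
    colVec w w' (pairTuple T {E}) =
      ((∏ e, w e) * w E) • rowVec w T + ((∏ e, w' e) * w' E) • rowVec w' T := by
  simp [colVec_eq, (pairPattern_pairTuple T {E}).pairSupport_eq, pairMonomial_pairTuple,
    inter_singleton_of_mem hE]

theorem rowVec_testRow (T S : Finset (Fin (h + 1))) (hT : T.card = 3) :
    rowVec w T (testRow T S hT) = ∏ e ∈ Tᶜ ∩ S, w e :=
  pairMonomial_pairTuple w Tᶜ S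

theorem pairSupport_eq_compl_of_colVec_ne_zero {T : Finset (Fin (h + 1))}
    {x : Fin (2 * h + 2) → Fin 2} (hx : PairPattern T x) {r : RowIdx h}
    (hr : colVec w w' x r ≠ 0) : pairSupport r.1 = Tᶜ := by
  by_contra hne
  have hrow : ∀ w'' : Fin (h + 1) → ℂ, rowVec w'' T r = 0 := fun w'' =>
    if_neg fun hp => hne (PairPattern.pairSupport_eq hp)
  simp [colVec_eq, hx.pairSupport_eq, hrow] at hr

theorem linearIndependent_rowVec {T : Finset (Fin (h + 1))} (hT : T.card = 3) {f : Fin (h + 1)}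
    (hf : f ∉ T) (hff : w f ≠ w' f) : LinearIndependent ℂ ![rowVec w T, rowVec w' T] := by
  rw [LinearIndependent.pair_iff]
  intro s t hst
  have h0 := congr_fun hst (testRow T ∅ hT)
  have h1 := congr_fun hst (testRow T {f} hT)
  simp only [Pi.add_apply, Pi.smul_apply, smul_eq_mul, Pi.zero_apply, rowVec_testRow,
    inter_empty, prod_empty, inter_singleton_of_mem (mem_compl.2 hf), prod_singleton] at h0 h1
  have ht : t = 0 := by
    have : t * (w' f - w f) = 0 := by linear_combination h1 - w f * h0
    exact (mul_eq_zero.1 this).resolve_right (sub_ne_zero.2 hff.symm)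
  exact ⟨by linear_combination h0 - ht, ht⟩

noncomputable def mismatch : Finset (Fin (h + 1)) := {e | w e ≠ w' e}

theorem mem_mismatch {e : Fin (h + 1)} : e ∈ mismatch w w' ↔ w e ≠ w' e := by
  simp [mismatch]

def splitSets (D : Finset (Fin (h + 1))) : Finset (Finset (Fin (h + 1))) :=
  {T ∈ powersetCard 3 univ | (T ∩ D).Nonempty ∧ (D \ T).Nonempty}

-- The value `0` for empty `T ∩ D` is never used.
def splitPoint (D T : Finset (Fin (h + 1))) : Fin (h + 1) :=
  if hne : (T ∩ D).Nonempty then (T ∩ D).min' hne else 0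

theorem splitPoint_mem {D T : Finset (Fin (h + 1))} (hne : (T ∩ D).Nonempty) :
    splitPoint D T ∈ T ∩ D := by
  rw [splitPoint, dif_pos hne]
  exact min'_mem _ _

def basisIdx (D : Finset (Fin (h + 1))) : Finset (Finset (Fin (h + 1)) ⊕ Finset (Fin (h + 1))) :=
  (powersetCard 3 univ).disjSum (splitSets D)

def basisTuple (D : Finset (Fin (h + 1))) :
    Finset (Fin (h + 1)) ⊕ Finset (Fin (h + 1)) → Fin (2 * h + 2) → Fin 2
  | .inl T => pairTuple T ∅
  | .inr T => pairTuple T {splitPoint D T}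

theorem pairPattern_basisTuple (D : Finset (Fin (h + 1))) (k) :
    PairPattern (Sum.elim id id k) (basisTuple D k) := by
  cases k <;> exact pairPattern_pairTuple _ _

theorem basisIdx_fiber (D T : Finset (Fin (h + 1))) :
    {k | k ∈ (basisIdx D : Set _) ∧ Sum.elim id id k = T} =
      (if T.card = 3 then {.inl T} else ∅) ∪ (if T ∈ splitSets D then {.inr T} else ∅) := by
  ext (T' | T') <;> by_cases hT' : T' = T <;> simp_all [basisIdx, splitSets]

section Rank

variable {w w'}

theorem det_ne_zero_of_mem_mismatch (hw : ∏ e, w e ≠ 0) (hw' : ∏ e, w' e ≠ 0) {E : Fin (h + 1)}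
    (hE : E ∈ mismatch w w') :
    (∏ e, w e) * ((∏ e, w' e) * w' E) - (∏ e, w' e) * ((∏ e, w e) * w E) ≠ 0 := by
  rw [show (∏ e, w e) * ((∏ e, w' e) * w' E) - (∏ e, w' e) * ((∏ e, w e) * w E) =
    (∏ e, w e) * (∏ e, w' e) * (w' E - w E) by ring]
  exact mul_ne_zero (mul_ne_zero hw hw') (sub_ne_zero.2 ((mem_mismatch w w').1 hE).symm)

theorem colVec_mem_span_of_agree_on {T : Finset (Fin (h + 1))} (hagree : ∀ e ∈ T, w e = w' e)
    {x : Fin (2 * h + 2) → Fin 2} (hx : PairPattern T x) :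
    colVec w w' x ∈ ℂ ∙ colVec w w' (pairTuple T ∅) := by
  rw [colVec_pairTuple_empty, colVec_eq w w' x, hx.pairSupport_eq, ← pairMonomial_congr hagree]
  exact Submodule.mem_span_singleton.2 ⟨pairMonomial w T x, by module⟩

theorem colVec_mem_span_of_agree_off (hsum : ∏ e, w e + ∏ e, w' e ≠ 0)
    {T : Finset (Fin (h + 1))} (hagree : ∀ e ∉ T, w e = w' e) {x : Fin (2 * h + 2) → Fin 2}
    (hx : PairPattern T x) :
    colVec w w' x ∈ ℂ ∙ colVec w w' (pairTuple T ∅) := by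
  have hrow : rowVec w T = rowVec w' T := by
    unfold rowVec
    rw [pairMonomial_congr fun e he => hagree e (mem_compl.1 he)]
  rw [colVec_pairTuple_empty, colVec_eq w w' x, hx.pairSupport_eq, hrow, ← add_smul, ← add_smul]
  refine Submodule.mem_span_singleton.2 ⟨((∏ e, w e) * pairMonomial w T x +
    (∏ e, w' e) * pairMonomial w' T x) / (∏ e, w e + ∏ e, w' e), ?_⟩
  rw [smul_smul]
  congr 1
  field_simp

theorem colVec_mem_span_of_mem_mismatch (hw : ∏ e, w e ≠ 0) (hw' : ∏ e, w' e ≠ 0)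
    {T : Finset (Fin (h + 1))} {x : Fin (2 * h + 2) → Fin 2} (hx : PairPattern T x)
    {E : Fin (h + 1)} (hET : E ∈ T) (hED : E ∈ mismatch w w') :
    colVec w w' x ∈
      Submodule.span ℂ {colVec w w' (pairTuple T ∅), colVec w w' (pairTuple T {E})} := by
  rw [colVec_pairTuple_empty, colVec_pairTuple_singleton w w' hET]
  refine span_pair_le_span_pair_smul_add _ _ (det_ne_zero_of_mem_mismatch hw hw' hED) ?_
  rw [colVec_eq, hx.pairSupport_eq]
  exact add_mem (Submodule.smul_mem _ _ (Submodule.subset_span (by simp)))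
    (Submodule.smul_mem _ _ (Submodule.subset_span (by simp)))

theorem colVec_mem_span_basisTuple (hw : ∏ e, w e ≠ 0) (hw' : ∏ e, w' e ≠ 0)
    (hsum : ∏ e, w e + ∏ e, w' e ≠ 0) {T : Finset (Fin (h + 1))} (hT : T.card = 3)
    {x : Fin (2 * h + 2) → Fin 2} (hx : PairPattern T x) :
    colVec w w' x ∈ Submodule.span ℂ
      (colVec w w' ∘ basisTuple (mismatch w w') '' basisIdx (mismatch w w')) := by
  set D := mismatch w w'
  set V := Submodule.span ℂ (colVec w w' ∘ basisTuple D '' basisIdx D)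
  have h0 : colVec w w' (pairTuple T ∅) ∈ V :=
    Submodule.subset_span ⟨.inl T, by simp [D, basisIdx, hT], rfl⟩
  by_cases hmeet : (T ∩ D).Nonempty
  swap
  · refine (Submodule.span_singleton_le_iff_mem _ _).2 h0 (colVec_mem_span_of_agree_on
      (fun e he => not_ne_iff.1 fun hne => ?_) hx)
    exact hmeet ⟨e, mem_inter.2 ⟨he, (mem_mismatch w w').2 hne⟩⟩
  by_cases hmiss : (D \ T).Nonempty
  swap
  · refine (Submodule.span_singleton_le_iff_mem _ _).2 h0 (colVec_mem_span_of_agree_off hsum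
      (fun e he => not_ne_iff.1 fun hne => ?_) hx)
    exact hmiss ⟨e, mem_sdiff.2 ⟨(mem_mismatch w w').2 hne, he⟩⟩
  obtain ⟨hET, hED⟩ := mem_inter.1 (splitPoint_mem hmeet)
  have hE : colVec w w' (pairTuple T {splitPoint D T}) ∈ V :=
    Submodule.subset_span ⟨.inr T, by simp [D, basisIdx, splitSets, hT, hmeet, hmiss], rfl⟩
  exact Submodule.span_le.2 (Set.insert_subset_iff.2 ⟨h0, Set.singleton_subset_iff.2 hE⟩)
    (colVec_mem_span_of_mem_mismatch hw hw' hx hET hED)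

theorem linearIndepOn_colVec_basisTuple (hw : ∏ e, w e ≠ 0) (hw' : ∏ e, w' e ≠ 0)
    (hsum : ∏ e, w e + ∏ e, w' e ≠ 0) :
    LinearIndepOn ℂ (colVec w w' ∘ basisTuple (mismatch w w')) (basisIdx (mismatch w w')) := by
  set D := mismatch w w'
  refine linearIndepOn_of_fibers (Sum.elim id id) (fun r => (pairSupport r.1)ᶜ)
    (fun k _ r hne => ?_) (fun T => ?_)
  · rw [pairSupport_eq_compl_of_colVec_ne_zero w w' (pairPattern_basisTuple D k) hne,
      compl_compl]
  by_cases hT : T.card = 3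
  swap
  · have hsT : T ∉ splitSets D := fun hs => hT (mem_powersetCard_univ.1 (mem_filter.1 hs).1)
    simp only [basisIdx_fiber, hT, hsT, if_false, Set.union_empty]
    exact linearIndepOn_empty ℂ _
  by_cases hs : (T ∩ D).Nonempty ∧ (D \ T).Nonempty
  swap
  · have hsT : T ∉ splitSets D := fun h' => hs (mem_filter.1 h').2
    rw [basisIdx_fiber, if_pos hT, if_neg hsT, Set.union_empty, linearIndepOn_singleton_iff,
      Function.comp_apply, basisTuple, colVec_pairTuple_empty]
    intro h0
    exact hsum (by simpa [rowVec_testRow] using congr_fun h0 (testRow T ∅ hT))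
  obtain ⟨hmeet, f, hf⟩ := hs
  obtain ⟨hfD, hfT⟩ := mem_sdiff.1 hf
  obtain ⟨hET, hED⟩ := mem_inter.1 (splitPoint_mem hmeet)
  have hsT : T ∈ splitSets D := mem_filter.2 ⟨mem_powersetCard_univ.2 hT, hmeet, f, hf⟩
  have hcols := (linearIndependent_rowVec w w' hT hfT ((mem_mismatch w w').1 hfD)).pair_smul_add
    (det_ne_zero_of_mem_mismatch hw hw' hED)
  rw [basisIdx_fiber, if_pos hT, if_pos hsT, Set.singleton_union,
    LinearIndepOn.pair_iff _ Sum.inl_ne_inr]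
  simpa only [Function.comp_apply, basisTuple, colVec_pairTuple_empty,
    colVec_pairTuple_singleton w w' hET] using LinearIndependent.pair_iff.1 hcols

theorem rank_pmat_pairPeriod_add (hw : ∏ e, w e ≠ 0) (hw' : ∏ e, w' e ≠ 0)
    (hsum : ∏ e, w e + ∏ e, w' e ≠ 0) :
    (pmat h 3 (pairPeriod 3 w) + pmat h 3 (pairPeriod 3 w')).rank =
      (h + 1).choose 3 + (splitSets (mismatch w w')).card := by
  rw [show (h + 1).choose 3 = (powersetCard 3 (univ : Finset (Fin (h + 1)))).card by simp,
    ← card_disjSum, ← basisIdx]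
  refine Matrix.rank_eq_card_of_linearIndepOn _ (fun k hk => ?_)
    (linearIndepOn_colVec_basisTuple hw hw' hsum) (fun j => ?_)
  · have hT : (Sum.elim id id k : Finset (Fin (h + 1))).card = 3 := by
      cases k <;> simp_all [basisIdx, splitSets]
    exact ⟨⟨basisTuple _ k, (pairPattern_basisTuple _ k).sum_eq_card.trans hT⟩, rfl⟩
  · change colVec w w' j.1 ∈ _
    by_cases hj : PairPattern (pairSupport j.1) j.1
    · exact colVec_mem_span_basisTuple hw hw' hsum (hj.sum_eq_card.symm.trans j.2) hj
    · simp [colVec_eq, pairMonomial, hj]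

end Rank

theorem prod_pow_one_add_two_mul {M : Type*} [CommMonoid M] (z : M) (a : Fin (h + 1) → ℕ) :
    ∏ e, z ^ (1 + 2 * a e) = z ^ (h + 1 + 2 * ∑ e, a e) := by
  simp [prod_pow_eq_pow_sum, sum_add_distrib, mul_sum]

theorem sumRank_three (h μ : ℕ) :
    sumRank h 3 μ = (h + 1).choose 3 +
      (splitSets (univ.filter fun e : Fin (h + 1) => μ ≤ e.1)).card := by
  have hζ := isPrimitiveRoot_zeta2d_three
  have hprod := prod_pow_one_add_two_mul (h := h) (zeta2d 3)
  have hmismatch : mismatch (fun _ : Fin (h + 1) => zeta2d 3 ^ (1 + 2 * 0))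
      (fun e => zeta2d 3 ^ (1 + 2 * if e.1 < μ then 0 else 1)) = univ.filter fun e => μ ≤ e.1 := by
    ext e
    rw [mem_mismatch, mem_filter]
    by_cases he : e.1 < μ
    · simp [he]
    · have h13 : zeta2d 3 ^ 1 ≠ zeta2d 3 ^ 3 := fun h13 => by
        have := hζ.pow_inj (by norm_num) (by norm_num) h13
        omega
      simpa [he, not_lt.1 he] using h13
  rw [sumRank, Pvec, PcheckVec, pvec_refl_eq_pairPeriod, pvec_refl_eq_pairPeriod,
    rank_pmat_pairPeriod_add, hmismatch]
  · rw [hprod fun _ => 0]; exact pow_ne_zero _ (hζ.ne_zero (by norm_num))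
  · rw [hprod]; exact pow_ne_zero _ (hζ.ne_zero (by norm_num))
  · rw [hprod fun _ => 0, hprod]
    simpa using hζ.pow_add_pow_add_two_mul_ne_zero (h + 1) _

end FermatPeriod

/-- The table of values of `H_n(m) = rank([P_{i+j}] + [(P̌_m)_{i+j}])` for cubic Fermat
varieties (`d = 3`), with `n = 2h` and `μ = m+1`. -/
theorem cubic_rank_table :
    (∀ μ ≤ 3, sumRank 2 3 μ = 1) ∧
    (sumRank 3 3 4 = 4 ∧ sumRank 3 3 3 = 4 ∧ sumRank 3 3 2 = 6 ∧
      sumRank 3 3 1 = 7 ∧ sumRank 3 3 0 = 8) ∧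
    (sumRank 4 3 5 = 10 ∧ sumRank 4 3 4 = 10 ∧ sumRank 4 3 3 = 16 ∧
      sumRank 4 3 2 = 19 ∧ sumRank 4 3 1 = 20 ∧ sumRank 4 3 0 = 20) ∧
    (sumRank 5 3 6 = 20 ∧ sumRank 5 3 5 = 20 ∧ sumRank 5 3 4 = 32 ∧
      sumRank 5 3 3 = 38 ∧ sumRank 5 3 2 = 40 ∧ sumRank 5 3 1 = 40 ∧ sumRank 5 3 0 = 40) ∧
    (sumRank 6 3 7 = 35 ∧ sumRank 6 3 6 = 35 ∧ sumRank 6 3 5 = 55 ∧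
      sumRank 6 3 4 = 65 ∧ sumRank 6 3 3 = 69 ∧ sumRank 6 3 2 = 70 ∧
      sumRank 6 3 1 = 70 ∧ sumRank 6 3 0 = 70) := by
  simp only [FermatPeriod.sumRank_three]
  decide
end
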